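/- One has lim_{L→∞} N_L^{−(d−2)} · log P[ Σ_{i=1}^{m_L} U_i ≥ K̄^{−d} ρ_L (N_L/L)^d ] = −∞ (with the convention log 0 = −∞): the probability that at least ρ_L (N_L/L)^d / K̄^d of the m_L independent Bernoulli(η_L) trials succeed decays super-exponentially at rate faster than N_L^{d−2}. (Probabilistic core of Proposition 3.1, displays (3.13)–(3.19).) -/

import Mathlib

open MeasureTheory ProbabilityTheory
open scoped ENNReal

/-- `ρ_L = ( log L / |log η_L| )^{1/2}`. -/
noncomputable def rhoL (η : ℕ → ℝ) (L : ℕ) : ℝ :=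
  Real.sqrt (Real.log L / |Real.log (η L)|)

/-- `N_L = L^{d/2} (log L)^{−1/2}`. -/
noncomputable def NL (d L : ℕ) : ℝ :=
  (L : ℝ) ^ ((d : ℝ) / 2) * (Real.log L) ^ (-(1 / 2) : ℝ)

/-- `m_L = ⌊ c₄ (N_L/L)^d ⌋`. -/
noncomputable def mL (d : ℕ) (c₄ : ℝ) (L : ℕ) : ℕ :=
  ⌊c₄ * (NL d L / L) ^ d⌋₊

/-!
Chernoff's bound for the number of successes among `m_L` Bernoulli(`η_L`) trials, taken at
`t = |log η_L| / 2` where `η_L e^t = √η_L`, bounds the probability by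
`exp (-ε |log η_L| / 2 + m_L √η_L)` with `ε = K̄^{-d} ρ_L (N_L/L)^d`. Since
`ρ_L² |log η_L| = log L` and `(N_L/L)^d log L = N_L^{d-2}`, the first term is
`-N_L^{d-2} / (2 K̄^d ρ_L)`, and `ρ_L → 0`. The second term is at most `1`, because `m_L` grows
polynomially in `L` while `η_L` decays faster than every power of `L`.
-/

open Real Filter Topology

section Chernoff

variable {Ω : Type*} [MeasurableSpace Ω] {μ : Measure Ω} [IsProbabilityMeasure μ]

lemma exp_mul_ite_one_zero (t : ℝ) (b : Bool) :
    exp (t * if b then 1 else 0) = 1 + (exp t - 1) * if b then 1 else 0 := by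
  cases b <;> simp

lemma mgf_ite_one_zero {U : Ω → Bool} (hU : Measurable U) (t : ℝ) :
    mgf (fun ω => if U ω then (1 : ℝ) else 0) μ t
      = 1 + (exp t - 1) * μ.real {ω | U ω = true} := by
  have hA : MeasurableSet {ω | U ω = true} := hU (measurableSet_singleton true)
  have hind : ∀ ω, (if U ω then (1 : ℝ) else 0) = {ω | U ω = true}.indicator 1 ω := by
    simp [Set.indicator_apply]
  simp only [mgf, exp_mul_ite_one_zero]
  simp only [hind]
  rw [integral_add (integrable_const 1) (((integrable_const 1).indicator hA).const_mul _),
    integral_const_mul, integral_indicator_one hA]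
  simp

lemma mgf_ite_one_zero_le_exp {U : Ω → Bool} (hU : Measurable U) (t : ℝ) :
    mgf (fun ω => if U ω then (1 : ℝ) else 0) μ t
      ≤ exp (μ.real {ω | U ω = true} * exp t) := by
  rw [mgf_ite_one_zero hU]
  set p := μ.real {ω | U ω = true}
  have hp : 0 ≤ p := measureReal_nonneg
  calc 1 + (exp t - 1) * p ≤ exp ((exp t - 1) * p) := by
        linarith [add_one_le_exp ((exp t - 1) * p)]
    _ ≤ exp (p * exp t) := exp_le_exp.2 (by linarith)

theorem measureReal_bernoulli_sum_ge_le_exp {U : ℕ → Ω → Bool} (hU : ∀ i, Measurable (U i))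
    (hindep : iIndepFun U μ) {p : ℝ} (hp : ∀ i, μ.real {ω | U i ω = true} = p)
    (m : ℕ) (ε : ℝ) {t : ℝ} (ht : 0 ≤ t) :
    μ.real {ω | ε ≤ ∑ i ∈ Finset.range m, (if U i ω then (1 : ℝ) else 0)}
      ≤ exp (-t * ε + m * (p * exp t)) := by
  set X : ℕ → Ω → ℝ := fun i ω => if U i ω then 1 else 0
  have hX : ∀ i, Measurable (X i) := fun i =>
    (measurable_of_countable fun b : Bool => if b then (1 : ℝ) else 0).comp (hU i)
  have hXindep : iIndepFun X μ :=
    hindep.comp (fun _ (b : Bool) => if b then (1 : ℝ) else 0) fun _ => measurable_of_countable _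
  have hint : ∀ i ∈ Finset.range m, Integrable (fun ω => exp (t * X i ω)) μ := by
    intro i _
    refine .of_bound (by fun_prop) (exp t + 1) (.of_forall fun ω => ?_)
    rw [Real.norm_of_nonneg (exp_nonneg _)]
    simp only [X]
    split_ifs <;> simp [exp_nonneg]
  calc μ.real {ω | ε ≤ ∑ i ∈ Finset.range m, X i ω}
      = μ.real {ω | ε ≤ (∑ i ∈ Finset.range m, X i) ω} := by simp only [Finset.sum_apply]
    _ ≤ exp (-t * ε) * ∏ i ∈ Finset.range m, mgf (X i) μ t := by
        rw [← hXindep.mgf_sum hX]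
        exact measure_ge_le_exp_mul_mgf ε ht (hXindep.integrable_exp_mul_sum hX hint)
    _ ≤ exp (-t * ε) * ∏ i ∈ Finset.range m, exp (p * exp t) := by
        gcongr with i
        · exact fun i _ => mgf_nonneg
        · exact hp i ▸ mgf_ite_one_zero_le_exp (hU i) t
    _ = exp (-t * ε + m * (p * exp t)) := by
        rw [Finset.prod_const, Finset.card_range, ← exp_nat_mul, ← exp_add]

theorem measureReal_bernoulli_sum_ge_le_exp_sqrt {U : ℕ → Ω → Bool}
    (hU : ∀ i, Measurable (U i)) (hindep : iIndepFun U μ) {p : ℝ}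
    (hp : ∀ i, μ.real {ω | U i ω = true} = p) (hp0 : 0 < p)
    (m : ℕ) (ε : ℝ) :
    μ.real {ω | ε ≤ ∑ i ∈ Finset.range m, (if U i ω then (1 : ℝ) else 0)}
      ≤ exp (-(ε * |log p|) / 2 + m * √p) := by
  have hlog : log p ≤ 0 := log_nonpos hp0.le (hp 0 ▸ measureReal_le_one)
  have hsqrt : p * exp (-log p / 2) = √p := by
    rw [sqrt_eq_rpow, rpow_def_of_pos hp0, ← exp_log hp0, ← exp_add, log_exp]
    ring_nf
  convert measureReal_bernoulli_sum_ge_le_exp hU hindep hp m ε (t := -log p / 2) (by linarith)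
    using 3
  · rw [abs_of_nonpos hlog]; ring
  · rw [hsqrt]

end Chernoff

lemma NL_nonneg (d L : ℕ) : 0 ≤ NL d L :=
  mul_nonneg (rpow_nonneg (Nat.cast_nonneg L) _) (rpow_nonneg (log_natCast_nonneg L) _)

lemma NL_sq_mul_log {d L : ℕ} (hL : 2 ≤ L) : NL d L ^ 2 * log L = (L : ℝ) ^ d := by
  have hlog : 0 < log L := log_pos (by exact_mod_cast hL)
  rw [NL, mul_pow, ← rpow_natCast, ← rpow_mul (Nat.cast_nonneg L), ← rpow_natCast (log L ^ _),
    ← rpow_mul hlog.le]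
  norm_num
  rw [rpow_neg_one, mul_assoc, inv_mul_cancel₀ hlog.ne', mul_one]

lemma one_le_NL {d L : ℕ} (hd : 1 ≤ d) (hL : 2 ≤ L) : 1 ≤ NL d L := by
  have hL1 : (1 : ℝ) ≤ L := by exact_mod_cast hL.trans' one_le_two
  have hlog : 0 < log L := log_pos (by exact_mod_cast hL)
  have hpow : log L ≤ (L : ℝ) ^ d :=
    (log_le_self (by positivity)).trans (le_self_pow₀ hL1 (by omega))
  have hsq : 1 ≤ NL d L ^ 2 := by
    nlinarith [NL_sq_mul_log (d := d) hL]
  nlinarith [NL_nonneg d L]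

lemma NL_le_pow {d L : ℕ} (hd : 1 ≤ d) (hL : 3 ≤ L) : NL d L ≤ (L : ℝ) ^ d := by
  have hlog : 1 ≤ log L := by
    rw [le_log_iff_exp_le (by positivity)]
    have : (3 : ℝ) ≤ L := by exact_mod_cast hL
    linarith [exp_one_lt_d9]
  have hN := one_le_NL hd (by omega : 2 ≤ L)
  nlinarith [NL_sq_mul_log (d := d) (by omega : 2 ≤ L)]

lemma NL_div_pow_mul_log {d L : ℕ} (hd : 2 ≤ d) (hL : 2 ≤ L) :
    (NL d L / L) ^ d * log L = NL d L ^ (d - 2) := by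
  have hLd : (L : ℝ) ^ d ≠ 0 := by positivity
  obtain ⟨k, rfl⟩ := Nat.exists_eq_add_of_le hd
  rw [div_pow, div_mul_eq_mul_div, div_eq_iff hLd, ← NL_sq_mul_log hL, Nat.add_sub_cancel_left,
    pow_add]
  ring

lemma mL_le_pow {d L : ℕ} {c₄ : ℝ} (hc₄ : 0 ≤ c₄) (hd : 1 ≤ d) (hL : 3 ≤ L) :
    (mL d c₄ L : ℝ) ≤ c₄ * (L : ℝ) ^ (d * d) := by
  have hNL : NL d L / L ≤ (L : ℝ) ^ d :=
    (div_le_self (NL_nonneg d L) (by exact_mod_cast hL.trans' (by norm_num))).trans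
      (NL_le_pow hd hL)
  calc (mL d c₄ L : ℝ) ≤ c₄ * (NL d L / L) ^ d := Nat.floor_le (by positivity [NL_nonneg d L])
    _ ≤ c₄ * (L : ℝ) ^ (d * d) := by
      rw [pow_mul]
      gcongr
      positivity [NL_nonneg d L]

lemma eventually_le_inv_pow_of_tendsto_log_div_log {η : ℕ → ℝ} (hη : ∀ᶠ L in atTop, 0 < η L)
    (hdecay : Tendsto (fun L : ℕ => log (η L) / log L) atTop atBot) (k : ℕ) :
    ∀ᶠ L in atTop, η L ≤ ((L : ℝ) ^ k)⁻¹ := by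
  filter_upwards [hη, hdecay.eventually_le_atBot (-k), eventually_ge_atTop 2]
    with L hηL hdiv hL
  have hlog : 0 < log L := log_pos (by exact_mod_cast hL)
  rw [div_le_iff₀ hlog] at hdiv
  rw [← log_le_log_iff hηL (by positivity), log_inv, log_pow]
  linarith

lemma eventually_mL_mul_sqrt_le_one {d : ℕ} {c₄ : ℝ} {η : ℕ → ℝ} (hd : 1 ≤ d) (hc₄ : 0 ≤ c₄)
    (hη : ∀ᶠ L in atTop, 0 < η L)
    (hdecay : Tendsto (fun L : ℕ => log (η L) / log L) atTop atBot) :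
    ∀ᶠ L in atTop, (mL d c₄ L : ℝ) * √(η L) ≤ 1 := by
  filter_upwards [eventually_le_inv_pow_of_tendsto_log_div_log hη hdecay (2 * (d * d + 1)),
    eventually_ge_atTop 3, (tendsto_natCast_atTop_atTop (R := ℝ)).eventually_ge_atTop c₄]
    with L hηL hL hcL
  have hL0 : (0 : ℝ) < L := by positivity
  have hsqrt : √(η L) ≤ ((L : ℝ) ^ (d * d + 1))⁻¹ := by
    rw [sqrt_le_left (by positivity), inv_pow, ← pow_mul, mul_comm]
    exact hηL
  calc (mL d c₄ L : ℝ) * √(η L) ≤ c₄ * (L : ℝ) ^ (d * d) * ((L : ℝ) ^ (d * d + 1))⁻¹ := by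
        gcongr
        exact mL_le_pow hc₄ hd hL
    _ = c₄ / L := by
        rw [pow_succ]
        field_simp
    _ ≤ 1 := (div_le_one hL0).2 hcL

lemma tendsto_rhoL_nhdsGT_zero {η : ℕ → ℝ}
    (hdecay : Tendsto (fun L : ℕ => log (η L) / log L) atTop atBot) :
    Tendsto (rhoL η) atTop (𝓝[>] 0) := by
  have hratio : ∀ᶠ L : ℕ in atTop, log L / |log (η L)| = |(log (η L) / log L)⁻¹| := by
    filter_upwards [eventually_ge_atTop 2] with L hL
    rw [inv_div, abs_div, abs_of_pos (log_pos (by exact_mod_cast hL : (1 : ℝ) < L))]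
  have hlim : Tendsto (rhoL η) atTop (𝓝 0) := by
    have h := ((tendsto_inv_atBot_zero.comp hdecay).abs.congr' (hratio.mono fun _ h => h.symm)).sqrt
    rwa [abs_zero, sqrt_zero] at h
  refine tendsto_nhdsWithin_iff.2 ⟨hlim, ?_⟩
  filter_upwards [hdecay.eventually_le_atBot (-1), eventually_ge_atTop 2] with L hdiv hL
  have hlog : 0 < log L := log_pos (by exact_mod_cast hL)
  rw [div_le_iff₀ hlog] at hdiv
  exact sqrt_pos.2 (div_pos hlog (abs_pos.2 (by linarith)))

lemma rhoL_mul_abs_log {η : ℕ → ℝ} {L : ℕ} (hL : 2 ≤ L) (hη : log (η L) ≠ 0) :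
    rhoL η L * |log (η L)| = log L * (rhoL η L)⁻¹ := by
  have hlog : 0 < log L := log_pos (by exact_mod_cast hL)
  have habs : 0 < |log (η L)| := abs_pos.2 hη
  have hρ : 0 < rhoL η L := sqrt_pos.2 (div_pos hlog habs)
  have hρsq : rhoL η L ^ 2 = log L / |log (η L)| := sq_sqrt (div_pos hlog habs).le
  field_simp
  rw [hρsq]
  field_simp

/-- Probabilistic core of Proposition 3.1 (displays (3.13)–(3.19)): the probability that at
least `K̄^{−d} ρ_L (N_L/L)^d` of the `m_L` independent Bernoulli(`η_L`) trials succeed decays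
super-exponentially at rate faster than `N_L^{d−2}`; equivalently, for every `M` it is
eventually at most `exp(−M N_L^{d−2})` (which also encodes `lim N_L^{−(d−2)} log P = −∞`
with the convention `log 0 = −∞`). -/
theorem bernoulli_excess_superexponential_decay (d : ℕ) (hd : 3 ≤ d)
    (η : ℕ → ℝ) (hη : ∀ L, 2 ≤ L → η L ∈ Set.Ioo (0 : ℝ) 1)
    (hηdecay : Filter.Tendsto (fun L : ℕ => Real.log (η L) / Real.log L)
      Filter.atTop Filter.atBot)
    (c₄ : ℝ) (hc₄ : 0 < c₄) (Kb : ℝ) (hKb : 1 ≤ Kb)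
    (Ω : ℕ → Type) (mΩ : ∀ L, MeasurableSpace (Ω L))
    (P : ∀ L, Measure (Ω L)) (hP : ∀ L, IsProbabilityMeasure (P L))
    (U : ∀ L, ℕ → Ω L → Bool)
    (hUmeas : ∀ L i, Measurable (U L i))
    (hUindep : ∀ L, iIndepFun (U L) (P L))
    (hUdist : ∀ L i, P L {ω | U L i ω = true} = ENNReal.ofReal (η L)) :
    ∀ M : ℝ, ∀ᶠ L : ℕ in Filter.atTop,
      P L {ω | (Kb ^ d)⁻¹ * rhoL η L * (NL d L / L) ^ d ≤
          ∑ i ∈ Finset.range (mL d c₄ L), (if U L i ω then (1 : ℝ) else 0)} ≤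
        ENNReal.ofReal (Real.exp (-M * NL d L ^ (d - 2))) := by
  intro M
  have hηpos : ∀ᶠ L in atTop, 0 < η L := (eventually_ge_atTop 2).mono fun L hL => (hη L hL).1
  have hrate : ∀ᶠ L in atTop, 2 * (|M| + 1) ≤ (Kb ^ d)⁻¹ * (rhoL η L)⁻¹ :=
    ((tendsto_rhoL_nhdsGT_zero hηdecay).inv_tendsto_nhdsGT_zero.const_mul_atTop
      (by positivity)).eventually_ge_atTop _
  filter_upwards [hrate, eventually_mL_mul_sqrt_le_one (d := d) (by omega) hc₄.le hηpos hηdecay,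
    eventually_ge_atTop 3] with L hρ hm hL
  obtain ⟨hη0, hη1⟩ := hη L (by omega)
  have := hP L
  have hp : ∀ i, (P L).real {ω | U L i ω = true} = η L := fun i => by
    rw [measureReal_def, hUdist, ENNReal.toReal_ofReal hη0.le]
  have hexcess : (Kb ^ d)⁻¹ * rhoL η L * (NL d L / L) ^ d * |log (η L)|
      = (Kb ^ d)⁻¹ * (rhoL η L)⁻¹ * NL d L ^ (d - 2) := by
    rw [← NL_div_pow_mul_log (by omega) (by omega)]
    linear_combination (Kb ^ d)⁻¹ * (NL d L / L) ^ d *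
      rhoL_mul_abs_log (by omega) (log_neg hη0 hη1).ne
  have hN : 1 ≤ NL d L ^ (d - 2) := one_le_pow₀ (one_le_NL (by omega) (by omega))
  rw [← ENNReal.ofReal_toReal (measure_ne_top _ _), ← measureReal_def]
  refine ENNReal.ofReal_le_ofReal ((measureReal_bernoulli_sum_ge_le_exp_sqrt (hUmeas L)
    (hUindep L) hp hη0 _ _).trans (exp_le_exp.2 ?_))
  rw [hexcess]
  linarith [mul_le_mul_of_nonneg_right hρ (zero_le_one.trans hN),
    mul_nonneg (sub_nonneg.2 (le_abs_self M)) (zero_le_one.trans hN)]
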